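/- arXiv:2405.20779 — 2 statements merged into one kernel-verified Lean document; each statement's English description precedes it below -/
import Mathlib

section
/- Let X be an n×p real matrix, H = Iₙ − (1/n)1ₙ1ₙ' the centering matrix, and let HX = UDV' be a singular value decomposition. Then for any n×n matrices P₁,...,P_p, the matrix Y := (P₁u₁ | ⋯ | P_p u_p) D V' + 1ₙ x̄' (where uⱼ are the columns of U and x̄ = (1/n)X'1ₙ) satisfies: if each Pⱼ is a permutation matrix, then 1ₙ'(Pⱼuⱼ) = 1ₙ'uⱼ, and hence the column mean of Y equals x̄ whenever 1ₙ'U D V' = 0, which holds since H1ₙ = 0 implies 1ₙ'HX = 0. -/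
open Matrix

/-!
Summing the rows of a matrix is left multiplication by `1ᵀ`. The centering matrix satisfies
`1ᵀH = 0`, so the columns of `HX = UDVᵀ` sum to zero. A permutation matrix satisfies `1ᵀP = 1ᵀ`,
so permuting each column of `U` leaves `1ᵀU`, and hence `1ᵀUDVᵀ = 0`, unchanged. The column sums
of `Y` are therefore those of the rank-one term `1 x̄ᵀ`, namely `n x̄`.
-/

section ColumnSums

variable {R ι κ : Type*} [Fintype ι]

theorem one_vecMul_apply [NonAssocSemiring R] (A : Matrix ι κ R) (k : κ) :
    (1 ᵥ* A) k = ∑ i, A i k := by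
  simp [vecMul, dotProduct]

theorem one_vecMul_of_perm [NonAssocSemiring R] [DecidableEq ι] (σ : Equiv.Perm ι) :
    1 ᵥ* Matrix.of (fun i k : ι => if σ k = i then (1 : R) else 0) = 1 := by
  ext k
  simp [one_vecMul_apply]

theorem sum_mulVec_of_one_vecMul_eq_one [Semiring R]
    {P : Matrix ι ι R} (hP : 1 ᵥ* P = 1) (v : ι → R) :
    ∑ i, (P *ᵥ v) i = ∑ i, v i := by
  rw [← one_dotProduct, dotProduct_mulVec, hP, one_dotProduct]

theorem one_vecMul_of_mulVec_columns [Semiring R] {P : κ → Matrix ι ι R}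
    (hP : ∀ j, 1 ᵥ* P j = 1) (U : Matrix ι κ R) :
    1 ᵥ* Matrix.of (fun i j => (P j *ᵥ fun i' => U i' j) i) = 1 ᵥ* U := by
  ext j
  simp only [one_vecMul_apply, of_apply, sum_mulVec_of_one_vecMul_eq_one (hP j)]

theorem one_vecMul_centering_eq_zero [Field R] [DecidableEq ι] (hι : (Fintype.card ι : R) ≠ 0) :
    1 ᵥ* (1 - (Fintype.card ι : R)⁻¹ • Matrix.of (fun _ _ : ι => (1 : R))) = 0 := by
  have hJ : Matrix.of (fun _ _ : ι => (1 : R)) = vecMulVec 1 1 := by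
    ext; simp [vecMulVec_apply]
  rw [vecMul_sub, vecMul_one, vecMul_smul, hJ, vecMul_vecMulVec, one_dotProduct_one,
    smul_smul, inv_mul_cancel₀ hι, one_smul, sub_self]

end ColumnSums

theorem perm_SA_preserves_mean_general (n p : ℕ) (hn : 1 ≤ n)
    (X U : Matrix (Fin n) (Fin p) ℝ) (D V : Matrix (Fin p) (Fin p) ℝ)
    (H : Matrix (Fin n) (Fin n) ℝ)
    (hH : H = 1 - (n : ℝ)⁻¹ • Matrix.of (fun _ _ : Fin n => (1 : ℝ)))
    (hSVD : H * X = U * D * Vᵀ)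
    (P : Fin p → Matrix (Fin n) (Fin n) ℝ)
    (hP : ∀ j, ∃ σ : Equiv.Perm (Fin n),
      P j = Matrix.of (fun i k : Fin n => if σ k = i then (1 : ℝ) else 0))
    (xbar : Fin p → ℝ)
    (U₀ : Matrix (Fin n) (Fin p) ℝ)
    (hU₀ : U₀ = Matrix.of (fun i j => (P j).mulVec (fun i' => U i' j) i))
    (Y : Matrix (Fin n) (Fin p) ℝ)
    (hY : Y = U₀ * D * Vᵀ + Matrix.of (fun _ k => xbar k)) :
    (∀ j, ∑ i, (P j).mulVec (fun i' => U i' j) i = ∑ i, U i j) ∧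
    (∀ k, (n : ℝ)⁻¹ * ∑ i, Y i k = xbar k) := by
  have hn0 : (n : ℝ) ≠ 0 := Nat.cast_ne_zero.mpr (by omega)
  have hP1 : ∀ j, 1 ᵥ* P j = 1 := fun j => by
    obtain ⟨σ, hσ⟩ := hP j
    rw [hσ, one_vecMul_of_perm]
  refine ⟨fun j => sum_mulVec_of_one_vecMul_eq_one (hP1 j) _, fun k => ?_⟩
  have hH1 : 1 ᵥ* H = 0 := by
    simpa [hH] using one_vecMul_centering_eq_zero (ι := Fin n) (R := ℝ) (by simpa using hn0)
  have hHX : 1 ᵥ* (H * X) = 0 := by rw [← vecMul_vecMul, hH1, zero_vecMul]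
  have hU₀DV : 1 ᵥ* (U₀ * D * Vᵀ) = 0 := by
    rw [Matrix.mul_assoc, ← vecMul_vecMul, hU₀, one_vecMul_of_mulVec_columns hP1, vecMul_vecMul,
      ← Matrix.mul_assoc, ← hSVD, hHX]
  have hsum : ∑ i, Y i k = n * xbar k := by
    simpa [hY, one_vecMul_apply, Finset.sum_add_distrib] using congrFun hU₀DV k
  rw [hsum, inv_mul_cancel_left₀ hn0]

/-- Spectral anonymization with permutation matrices exactly preserves the
sample mean. Given `X : n × p`, the centering matrix `H`, a decomposition
`HX = U D Vᵀ`, permutation matrices `P₁,...,P_p`, and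
`Y := (P₁u₁ | ⋯ | P_p u_p) D Vᵀ + 1ₙ x̄ᵀ` with `x̄ = (1/n) Xᵀ1ₙ`:
each column satisfies `1ₙᵀ(Pⱼuⱼ) = 1ₙᵀuⱼ`, and the column mean of `Y`
equals `x̄`. -/
theorem perm_SA_preserves_mean (n p : ℕ) (hn : 1 ≤ n)
    (X U : Matrix (Fin n) (Fin p) ℝ) (D V : Matrix (Fin p) (Fin p) ℝ)
    (H : Matrix (Fin n) (Fin n) ℝ)
    (hH : H = 1 - (n : ℝ)⁻¹ • Matrix.of (fun _ _ : Fin n => (1 : ℝ)))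
    (hSVD : H * X = U * D * Vᵀ)
    (P : Fin p → Matrix (Fin n) (Fin n) ℝ)
    (hP : ∀ j, ∃ σ : Equiv.Perm (Fin n),
      P j = Matrix.of (fun i k : Fin n => if σ k = i then (1 : ℝ) else 0))
    (xbar : Fin p → ℝ) (hxbar : xbar = fun k => (n : ℝ)⁻¹ * ∑ i, X i k)
    (U₀ : Matrix (Fin n) (Fin p) ℝ)
    (hU₀ : U₀ = Matrix.of (fun i j => (P j).mulVec (fun i' => U i' j) i))
    (Y : Matrix (Fin n) (Fin p) ℝ)
    (hY : Y = U₀ * D * Vᵀ + Matrix.of (fun _ k => xbar k)) :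
    (∀ j, ∑ i, (P j).mulVec (fun i' => U i' j) i = ∑ i, U i j) ∧
    (∀ k, (n : ℝ)⁻¹ * ∑ i, Y i k = xbar k) :=
  perm_SA_preserves_mean_general n p hn X U D V H hH hSVD P hP xbar U₀ hU₀ Y hY
end

section
/- Let K_{p,p} denote the (p,p)-commutation matrix and V_p := diag(vec(I_p)). Then the p²×p² matrix M := 2I_{p²} + 2K_{p,p} − 2V_p is symmetric and positive semidefinite, and M − (I_{p²} + K_{p,p}) = I_{p²} + K_{p,p} − 2V_p is positive semidefinite. -/
open Matrix

/-! `K_{p,p}` is a symmetric involution fixing the image of `V_p`, so `(I + K)/2` and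
`(I + K - 2V)/2` are orthogonal projections, hence positive semidefinite, and
`2I + 2K - 2V = (I + K - 2V) + (I + K)`. -/

open scoped ComplexOrder in
theorem Matrix.PosSemidef.of_isHermitian_of_mul_self_eq_smul {n 𝕜 : Type*} [Fintype n]
    [RCLike 𝕜] {A : Matrix n n 𝕜} (hA : A.IsHermitian) {c : ℝ} (hc : 0 < c)
    (h : A * A = c • A) : A.PosSemidef := by
  have hA_eq : A = c⁻¹ • (Aᴴ * A) := by
    rw [hA.eq, h, smul_smul, inv_mul_cancel₀ hc.ne', one_smul]
  rw [hA_eq]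
  exact (posSemidef_conjTranspose_mul_self A).smul (inv_nonneg.2 hc.le)

section Ring

variable {α : Type*} [Ring α] {k v : α}

theorem one_add_mul_self_of_mul_self_eq_one (hkk : k * k = 1) :
    (1 + k) * (1 + k) = 2 • (1 + k) := by
  simp only [two_nsmul, add_mul, mul_add, hkk, one_mul, mul_one]
  abel

theorem one_add_sub_two_nsmul_mul_self (hkk : k * k = 1) (hkv : k * v = v) (hvk : v * k = v)
    (hvv : v * v = v) : (1 + k - 2 • v) * (1 + k - 2 • v) = 2 • (1 + k - 2 • v) := by
  simp only [two_nsmul, add_mul, mul_add, sub_mul, mul_sub, hkk, hkv, hvk, hvv, one_mul, mul_one]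
  abel

end Ring

section CommutationMatrix

variable (n : Type*) [DecidableEq n]

def commutationMatrix (R : Type*) [Zero R] [One R] : Matrix (n × n) (n × n) R :=
  (Equiv.prodComm n n).toPEquiv.toMatrix

/-- `V_p = diag(vec(I_p))`. -/
def diagVecOne (R : Type*) [Zero R] [One R] : Matrix (n × n) (n × n) R :=
  diagonal fun ij => if ij.1 = ij.2 then 1 else 0

variable {n}

section

variable {R : Type*} [Zero R] [One R]

theorem transpose_commutationMatrix : (commutationMatrix n R)ᵀ = commutationMatrix n R := by
  rw [commutationMatrix, ← PEquiv.toMatrix_symm, ← Equiv.toPEquiv_symm, Equiv.prodComm_symm]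

theorem isSymm_diagVecOne : (diagVecOne n R).IsSymm :=
  isSymm_diagonal _

end

variable [Fintype n] {R : Type*} [NonAssocSemiring R]

theorem commutationMatrix_mulVec (x : n × n → R) :
    commutationMatrix n R *ᵥ x = x ∘ Prod.swap :=
  PEquiv.toMatrix_toPEquiv_mulVec _ _

theorem eq_commutationMatrix_of_mulVec {K : Matrix (n × n) (n × n) R}
    (hK : ∀ x : n × n → R, K *ᵥ x = x ∘ Prod.swap) : K = commutationMatrix n R := by
  rw [ext_iff_mulVec]
  intro x
  rw [hK, commutationMatrix_mulVec]

theorem commutationMatrix_mul_self : commutationMatrix n R * commutationMatrix n R = 1 := by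
  have hswap := (Equiv.prodComm n n).self_trans_symm
  rw [Equiv.prodComm_symm] at hswap
  rw [commutationMatrix, ← PEquiv.toMatrix_trans, ← Equiv.toPEquiv_trans, hswap,
    Equiv.toPEquiv_refl, PEquiv.toMatrix_refl]

theorem commutationMatrix_mul_diagVecOne :
    commutationMatrix n R * diagVecOne n R = diagVecOne n R := by
  ext ⟨i, j⟩ ⟨k, l⟩
  rw [commutationMatrix, PEquiv.toMatrix_toPEquiv_mul]
  by_cases h : i = j
  · subst h
    rfl
  · simp [diagVecOne, diagonal_apply, h, Ne.symm h]

theorem diagVecOne_mul_commutationMatrix :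
    diagVecOne n R * commutationMatrix n R = diagVecOne n R := by
  ext ⟨i, j⟩ ⟨k, l⟩
  rw [commutationMatrix, PEquiv.mul_toMatrix_toPEquiv]
  by_cases h : k = l
  · subst h
    rfl
  · simp only [diagVecOne, submatrix_apply, diagonal_apply]
    grind

theorem diagVecOne_mul_self : diagVecOne n R * diagVecOne n R = diagVecOne n R := by
  rw [diagVecOne, diagonal_mul_diagonal]
  congr 1
  ext ij
  split_ifs <;> simp

end CommutationMatrix

/-- With `K` the `(p,p)`-commutation matrix (characterized by
`K vec(A) = vec(Aᵀ)` for all `p × p` matrices `A`, vectors being indexed by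
pairs) and `V = diag(vec(I_p))`, the matrix `M = 2I + 2K − 2V` is symmetric and
positive semidefinite, and `M − (I + K) = I + K − 2V` is positive
semidefinite. -/
theorem commutation_matrix_psd (p : ℕ)
    (K : Matrix (Fin p × Fin p) (Fin p × Fin p) ℝ)
    (hK : ∀ A : Matrix (Fin p) (Fin p) ℝ,
      K.mulVec (fun ij => A ij.1 ij.2) = fun ij => A ij.2 ij.1)
    (V : Matrix (Fin p × Fin p) (Fin p × Fin p) ℝ)
    (hV : V = Matrix.diagonal (fun ij => if ij.1 = ij.2 then (1 : ℝ) else 0)) :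
    (2 • (1 : Matrix (Fin p × Fin p) (Fin p × Fin p) ℝ) + 2 • K - 2 • V).IsSymm ∧
    (2 • (1 : Matrix (Fin p × Fin p) (Fin p × Fin p) ℝ) + 2 • K - 2 • V).PosSemidef ∧
    ((1 : Matrix (Fin p × Fin p) (Fin p × Fin p) ℝ) + K - 2 • V).PosSemidef := by
  obtain rfl : K = commutationMatrix (Fin p) ℝ :=
    eq_commutationMatrix_of_mulVec fun x => hK fun i j => x (i, j)
  obtain rfl : V = diagVecOne (Fin p) ℝ := hV
  set K := commutationMatrix (Fin p) ℝ
  set V := diagVecOne (Fin p) ℝ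
  have hsymm_one_add : (1 + K).IsSymm := isSymm_one.add transpose_commutationMatrix
  have hsymm_sub : (1 + K - 2 • V).IsSymm := hsymm_one_add.sub (isSymm_diagVecOne.smul 2)
  have hpsd_one_add : (1 + K).PosSemidef :=
    .of_isHermitian_of_mul_self_eq_smul (isHermitian_iff_isSymm.2 hsymm_one_add) two_pos <| by
      rw [ofNat_smul_eq_nsmul ℝ 2, one_add_mul_self_of_mul_self_eq_one commutationMatrix_mul_self]
  have hpsd_sub : (1 + K - 2 • V).PosSemidef :=
    .of_isHermitian_of_mul_self_eq_smul (isHermitian_iff_isSymm.2 hsymm_sub) two_pos <| by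
      rw [ofNat_smul_eq_nsmul ℝ 2, one_add_sub_two_nsmul_mul_self commutationMatrix_mul_self
        commutationMatrix_mul_diagVecOne diagVecOne_mul_commutationMatrix diagVecOne_mul_self]
  have hsplit : 2 • 1 + 2 • K - 2 • V = (1 + K - 2 • V) + (1 + K) := by
    simp only [two_nsmul]
    abel
  rw [hsplit]
  exact ⟨hsymm_sub.add hsymm_one_add, hpsd_sub.add hpsd_one_add, hpsd_sub⟩
end
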